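/- arXiv:math/0211260 — 4 statements merged into one kernel-verified Lean document; each statement's English description precedes it below -/
import Mathlib

section
/- For every n ≥ 2, the number of occurrences of the subsequence 1-2 (a 1 occurring before a 2, not necessarily adjacent) in C_n equals 2·4^{n-2} + (n-2)·2^{n-2}, and the same formula holds for D_n. -/
/-! Counting occurrences of `1-2` is additive over concatenation up to the cross term
`#₁(u) · #₂(v)`. As `C_{k+1}` has `2^k` ones and `D_{k+1}` has `2^k` twos, the counts in
`C_{k+2}` and in `D_{k+2}` both equal `s(C_{k+1}) + s(D_{k+1}) + 4^k + 2^k`; starting from `2`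
at `k = 0`, this recursion gives `2 · 4^k + k · 2^k`. -/

/-- The pair `(C_n, D_n)` of sigma-words, with `C_0 = D_0 = []`,
`C_{k+1} = C_k · 1 · D_k`, `D_{k+1} = C_k · 2 · D_k`
(so `C_1 = [1]`, `D_1 = [2]`). -/
def sigmaCD : ℕ → List ℕ × List ℕ
  | 0 => ([], [])
  | k + 1 => ((sigmaCD k).1 ++ 1 :: (sigmaCD k).2, (sigmaCD k).1 ++ 2 :: (sigmaCD k).2)

/-- The sigma-word `C_n`. -/
def sigmaC (n : ℕ) : List ℕ := (sigmaCD n).1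

/-- The sigma-word `D_n`. -/
def sigmaD (n : ℕ) : List ℕ := (sigmaCD n).2

/-- Number of occurrences of `p` as a (not necessarily contiguous) subsequence of `w`,
counted with multiplicity of position sets. -/
def subseqCount (p w : List ℕ) : ℕ := (w.sublistsLen p.length).count p

/-- Number of occurrences of `p` as a factor (contiguous subword) of `w`,
i.e. the number of starting positions at which `p` occurs in `w`. -/
def factorCount (p w : List ℕ) : ℕ :=
  (List.range w.length).countP fun i => decide ((w.drop i).take p.length = p)

theorem List.count_cons_map_cons (x a : ℕ) (p : List ℕ) (L : List (List ℕ)) :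
    (L.map (List.cons x)).count (a :: p) = if x = a then L.count p else 0 := by
  split_ifs with h
  · subst h
    exact L.count_map_of_injective _ List.cons_injective p
  · refine List.count_eq_zero.2 fun hmem => h ?_
    obtain ⟨_, _, hl⟩ := List.mem_map.1 hmem
    exact (List.cons_eq_cons.1 hl).1

theorem subseqCount_singleton (b : ℕ) (t : List ℕ) : subseqCount [b] t = t.count b := by
  rw [subseqCount, List.length_singleton, List.sublistsLen_one,
    List.count_map_of_injective _ _ List.singleton_injective, List.count_reverse]

theorem subseqCount_cons_cons (a x : ℕ) (p t : List ℕ) :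
    subseqCount (a :: p) (x :: t) =
      subseqCount (a :: p) t + if x = a then subseqCount p t else 0 := by
  rw [subseqCount, List.length_cons, List.sublistsLen_succ_cons, List.count_append,
    List.count_cons_map_cons, subseqCount, subseqCount, List.length_cons]

theorem subseqCount_pair_cons (a b x : ℕ) (t : List ℕ) :
    subseqCount [a, b] (x :: t) = subseqCount [a, b] t + if x = a then t.count b else 0 := by
  rw [subseqCount_cons_cons, subseqCount_singleton]

theorem subseqCount_pair_append (a b : ℕ) (u v : List ℕ) :
    subseqCount [a, b] (u ++ v) =
      subseqCount [a, b] u + subseqCount [a, b] v + u.count a * v.count b := by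
  induction u with
  | nil => simp [subseqCount]
  | cons x u ih =>
    rw [List.cons_append, subseqCount_pair_cons, subseqCount_pair_cons, ih, List.count_append,
      List.count_cons]
    by_cases h : x = a <;> simp [h]; ring

theorem sigmaC_succ (k : ℕ) : sigmaC (k + 1) = sigmaC k ++ 1 :: sigmaD k := rfl

theorem sigmaD_succ (k : ℕ) : sigmaD (k + 1) = sigmaC k ++ 2 :: sigmaD k := rfl

theorem count_one_sigma_succ (k : ℕ) :
    (sigmaC (k + 1)).count 1 = 2 ^ k ∧ (sigmaD (k + 1)).count 1 + 1 = 2 ^ k := by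
  induction k with
  | zero => decide
  | succ k ih =>
    rw [sigmaC_succ (k + 1), sigmaD_succ (k + 1)]
    simp only [List.count_append, List.count_cons_self, List.count_cons_of_ne (by decide : 2 ≠ 1)]
    omega

theorem count_two_sigma_succ (k : ℕ) :
    (sigmaC (k + 1)).count 2 + 1 = 2 ^ k ∧ (sigmaD (k + 1)).count 2 = 2 ^ k := by
  induction k with
  | zero => decide
  | succ k ih =>
    rw [sigmaC_succ (k + 1), sigmaD_succ (k + 1)]
    simp only [List.count_append, List.count_cons_self, List.count_cons_of_ne (by decide : 1 ≠ 2)]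
    omega

theorem subseqCount_sigmaC_succ_succ (k : ℕ) :
    subseqCount [1, 2] (sigmaC (k + 2)) =
      subseqCount [1, 2] (sigmaC (k + 1)) + subseqCount [1, 2] (sigmaD (k + 1)) +
        4 ^ k + 2 ^ k := by
  rw [sigmaC_succ (k + 1), subseqCount_pair_append, subseqCount_pair_cons, if_pos rfl,
    List.count_cons_of_ne (by decide : 1 ≠ 2), (count_one_sigma_succ k).1,
    (count_two_sigma_succ k).2, show (4 : ℕ) ^ k = 2 ^ k * 2 ^ k by rw [← mul_pow]; norm_num]
  ring

theorem subseqCount_sigmaD_succ_succ (k : ℕ) :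
    subseqCount [1, 2] (sigmaD (k + 2)) =
      subseqCount [1, 2] (sigmaC (k + 1)) + subseqCount [1, 2] (sigmaD (k + 1)) +
        4 ^ k + 2 ^ k := by
  rw [sigmaD_succ (k + 1), subseqCount_pair_append, subseqCount_pair_cons, if_neg (by decide),
    List.count_cons_self, (count_one_sigma_succ k).1, (count_two_sigma_succ k).2,
    show (4 : ℕ) ^ k = 2 ^ k * 2 ^ k by rw [← mul_pow]; norm_num]
  ring

theorem subseqCount_sigma_add_two (k : ℕ) :
    subseqCount [1, 2] (sigmaC (k + 2)) = 2 * 4 ^ k + k * 2 ^ k ∧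
      subseqCount [1, 2] (sigmaD (k + 2)) = 2 * 4 ^ k + k * 2 ^ k := by
  induction k with
  | zero => decide
  | succ k ih =>
    rw [subseqCount_sigmaC_succ_succ (k + 1), subseqCount_sigmaD_succ_succ (k + 1), ih.1, ih.2]
    constructor <;> ring

theorem subseq_12 (n : ℕ) (hn : 2 ≤ n) :
    subseqCount [1, 2] (sigmaC n) = 2 * 4 ^ (n - 2) + (n - 2) * 2 ^ (n - 2) ∧
    subseqCount [1, 2] (sigmaD n) = 2 * 4 ^ (n - 2) + (n - 2) * 2 ^ (n - 2) := by
  obtain ⟨k, rfl⟩ := Nat.exists_eq_add_of_le' hn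
  simpa using subseqCount_sigma_add_two k
end

section
/- For every n ≥ 4, the number of occurrences of the pattern 12-21 in C_n and in D_n both equal (1/2)·4^{n-2} - 3·2^{n-4}. -/
/-- Number of occurrences of the generalized pattern `12-21` in `w`:
pairs of indices `i < j` with `i + 2 ≤ j`, `w(i)w(i+1) = 12` and `w(j)w(j+1) = 21`. -/
def count1221 (w : List ℕ) : ℕ :=
  ((Finset.range w.length ×ˢ Finset.range w.length).filter fun q =>
    q.1 + 2 ≤ q.2 ∧ w.getD q.1 0 = 1 ∧ w.getD (q.1 + 1) 0 = 2 ∧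
      w.getD q.2 0 = 2 ∧ w.getD (q.2 + 1) 0 = 1).card

@[simp] theorem count1221_nil : count1221 [] = 0 := rfl

@[simp] theorem factorCount_nil (p : List ℕ) : factorCount p [] = 0 := rfl

theorem factorCount_cons (p : List ℕ) (x : ℕ) (s : List ℕ) :
    factorCount p (x :: s) = factorCount p s + if (x :: s).take p.length = p then 1 else 0 := by
  simp only [factorCount, List.length_cons, List.range_succ_eq_map, List.countP_cons,
    List.countP_map, List.drop_zero, Function.comp_def, List.drop_succ_cons, decide_eq_true_eq]

theorem factorCount_append_cons (a b : ℕ) (u : List ℕ) (c : ℕ) (v : List ℕ) :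
    factorCount [a, b] (u ++ c :: v) =
      factorCount [a, b] (u ++ [c]) + factorCount [a, b] (c :: v) := by
  induction u with
  | nil => simp [factorCount]
  | cons x u ih =>
    have hhead : (x :: (u ++ c :: v)).take 2 = (x :: (u ++ [c])).take 2 := by cases u <;> rfl
    simp only [List.cons_append, factorCount_cons, ih, List.length_cons, List.length_nil,
      Nat.reduceAdd, hhead]
    omega

theorem take_drop_eq_pair_iff {a b : ℕ} (ha : a ≠ 0) (hb : b ≠ 0) (w : List ℕ) (j : ℕ) :
    (w.drop j).take 2 = [a, b] ↔ w.getD j 0 = a ∧ w.getD (j + 1) 0 = b := by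
  induction w generalizing j with
  | nil => simp [ha.symm]
  | cons x w ih =>
    cases j with
    | zero => cases w with
      | nil => simp [hb.symm]
      | cons y w => simp
    | succ j => simpa using ih j

theorem factorCount_pair_eq_sum {a b : ℕ} (ha : a ≠ 0) (hb : b ≠ 0) (w : List ℕ) :
    factorCount [a, b] w =
      ∑ j ∈ Finset.range w.length, if w.getD j 0 = a ∧ w.getD (j + 1) 0 = b then 1 else 0 := by
  induction w with
  | nil => rfl
  | cons x s ih =>
    rw [List.length_cons, Finset.sum_range_succ', factorCount_cons, ih]
    exact congrArg _ (if_congr (take_drop_eq_pair_iff ha hb (x :: s) 0) rfl rfl)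

theorem count1221_eq_sum (w : List ℕ) :
    count1221 w = ∑ i ∈ Finset.range w.length, ∑ j ∈ Finset.range w.length,
      if i + 2 ≤ j ∧ w.getD i 0 = 1 ∧ w.getD (i + 1) 0 = 2 ∧
        w.getD j 0 = 2 ∧ w.getD (j + 1) 0 = 1 then 1 else 0 := by
  rw [count1221, Finset.card_filter, Finset.sum_product]

theorem count1221_cons (x : ℕ) (s : List ℕ) :
    count1221 (x :: s) =
      count1221 s + if (x :: s).take 2 = [1, 2] then factorCount [2, 1] (s.drop 1) else 0 := by
  cases s with
  | nil => simp [count1221]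
  | cons y t =>
    rw [count1221_eq_sum, count1221_eq_sum, List.length_cons, Finset.sum_range_succ']
    congr 1
    · refine Finset.sum_congr rfl fun i _ => ?_
      rw [Finset.sum_range_succ']
      simp
    · rw [factorCount_pair_eq_sum (by decide) (by decide)]
      rw [List.length_cons, Finset.sum_range_succ', Finset.sum_range_succ']
      by_cases hx : x = 1 <;> by_cases hy : y = 2 <;> simp [hx, hy]


/-- Every factor `12` of `u ++ [a, c]` precedes every factor `21` of `c :: v` by at least two
places, except when they overlap in `a c v₀ = 1 2 1`. -/
theorem count1221_append_cons_cons (u : List ℕ) (a c : ℕ) (v : List ℕ) :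
    count1221 (u ++ a :: c :: v) + (if (a :: c :: v).take 3 = [1, 2, 1] then 1 else 0) =
      count1221 (u ++ [a, c]) + count1221 (c :: v) +
        factorCount [1, 2] (u ++ [a, c]) * factorCount [2, 1] (c :: v) := by
  induction u with
  | nil =>
    have hac : count1221 [a, c] = 0 := by simp [count1221_cons]
    rw [List.nil_append, List.nil_append, count1221_cons a, factorCount_cons _ c v, hac,
      factorCount_cons, factorCount_cons, factorCount_nil]
    cases v with
    | nil => simp
    | cons y v =>
      by_cases ha : a = 1 <;> by_cases hc : c = 2 <;> by_cases hy : y = 1 <;>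
        simp [ha, hc, hy, add_assoc]
  | cons x u ih =>
    have hhead : (x :: (u ++ a :: c :: v)).take 2 = (x :: (u ++ [a, c])).take 2 := by
      cases u <;> rfl
    have htail : (u ++ a :: c :: v).drop 1 = (u ++ [a]).drop 1 ++ c :: v := by
      cases u <;> simp
    have htail' : (u ++ [a, c]).drop 1 = (u ++ [a]).drop 1 ++ [c] := by
      cases u <;> simp
    rw [List.cons_append, List.cons_append, count1221_cons x, count1221_cons x,
      factorCount_cons _ x, hhead, htail, htail', factorCount_append_cons, add_mul]
    simp only [List.length_cons, List.length_nil, Nat.reduceAdd]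
    split_ifs at ih ⊢ <;> omega

theorem factorCount_one_two_append_cons {u v : List ℕ} (hu : [2] <:+ u) (hv : [1] <+: v)
    (x : ℕ) : factorCount [1, 2] (u ++ x :: v) = factorCount [1, 2] u + factorCount [1, 2] v := by
  obtain ⟨u, rfl⟩ := hu
  obtain ⟨v, rfl⟩ := hv
  rw [List.append_assoc, List.singleton_append, factorCount_append_cons, factorCount_cons,
    factorCount_cons]
  simp

theorem factorCount_two_one_append_cons {u v : List ℕ} (hu : [2] <:+ u) (hv : [1] <+: v)
    {x : ℕ} (hx : x = 1 ∨ x = 2) :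
    factorCount [2, 1] (u ++ x :: v) = factorCount [2, 1] u + factorCount [2, 1] v + 1 := by
  obtain ⟨u, rfl⟩ := hu
  obtain ⟨v, rfl⟩ := hv
  rw [List.append_assoc, List.singleton_append, factorCount_append_cons, factorCount_cons,
    factorCount_cons]
  rcases hx with rfl | rfl <;> simp [add_assoc]

theorem count1221_append_cons {u v : List ℕ} (hu : [2, 2] <:+ u) (hv : [1] <+: v)
    {x : ℕ} (hx : x = 1 ∨ x = 2) :
    count1221 (u ++ x :: v) =
      count1221 u + count1221 v + factorCount [1, 2] u * (factorCount [2, 1] v + 1) := by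
  obtain ⟨u, rfl⟩ := hu
  obtain ⟨v, rfl⟩ := hv
  have h := count1221_append_cons_cons u 2 2 (x :: 1 :: v)
  rw [List.append_assoc, List.cons_append, List.cons_append, List.nil_append]
  rw [count1221_cons, count1221_cons, factorCount_cons, factorCount_cons] at h
  rcases hx with rfl | rfl <;> simpa using h

theorem one_prefix_sigmaC (k : ℕ) : [1] <+: sigmaC (k + 1) := by
  induction k with
  | zero => exact List.prefix_refl _
  | succ k ih => exact ih.trans (List.prefix_append _ _)

theorem one_prefix_sigmaD (k : ℕ) : [1] <+: sigmaD (k + 2) :=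
  (one_prefix_sigmaC k).trans (List.prefix_append _ _)

theorem two_two_suffix_sigmaD (k : ℕ) : [2, 2] <:+ sigmaD (k + 2) := by
  induction k with
  | zero => exact ⟨[1], rfl⟩
  | succ k ih => exact ih.trans ((List.suffix_cons _ _).trans (List.suffix_append _ _))

theorem two_two_suffix_sigmaC (k : ℕ) : [2, 2] <:+ sigmaC (k + 3) :=
  (two_two_suffix_sigmaD k).trans ((List.suffix_cons _ _).trans (List.suffix_append _ _))

theorem two_suffix_sigmaC (k : ℕ) : [2] <:+ sigmaC (k + 3) :=
  (List.suffix_cons _ _).trans (two_two_suffix_sigmaC k)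

theorem factorCount_one_two_sigma (k : ℕ) :
    factorCount [1, 2] (sigmaC (k + 3)) = 2 ^ (k + 1) ∧
      factorCount [1, 2] (sigmaD (k + 3)) = 2 ^ (k + 1) := by
  induction k with
  | zero => decide
  | succ k ih =>
    have hv : [1] <+: sigmaD (k + 3) := one_prefix_sigmaD (k + 1)
    rw [sigmaC_succ (k + 3), sigmaD_succ (k + 3),
      factorCount_one_two_append_cons (two_suffix_sigmaC k) hv,
      factorCount_one_two_append_cons (two_suffix_sigmaC k) hv, ih.1, ih.2, pow_succ 2 (k + 1)]
    omega

theorem factorCount_two_one_sigma (k : ℕ) :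
    factorCount [2, 1] (sigmaC (k + 3)) + 1 = 2 ^ (k + 1) ∧
      factorCount [2, 1] (sigmaD (k + 3)) + 1 = 2 ^ (k + 1) := by
  induction k with
  | zero => decide
  | succ k ih =>
    have hv : [1] <+: sigmaD (k + 3) := one_prefix_sigmaD (k + 1)
    rw [sigmaC_succ (k + 3), sigmaD_succ (k + 3),
      factorCount_two_one_append_cons (two_suffix_sigmaC k) hv (Or.inl rfl),
      factorCount_two_one_append_cons (two_suffix_sigmaC k) hv (Or.inr rfl), pow_succ 2 (k + 1)]
    omega

theorem count1221_sigma_append_cons (k : ℕ) {x : ℕ} (hx : x = 1 ∨ x = 2) :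
    count1221 (sigmaC (k + 3) ++ x :: sigmaD (k + 3)) =
      count1221 (sigmaC (k + 3)) + count1221 (sigmaD (k + 3)) + 4 ^ (k + 1) := by
  have hv : [1] <+: sigmaD (k + 3) := one_prefix_sigmaD (k + 1)
  rw [count1221_append_cons (two_two_suffix_sigmaC k) hv hx, (factorCount_one_two_sigma k).1,
    (factorCount_two_one_sigma k).2, ← mul_pow]
  rfl

theorem count1221_sigmaC_add_sigmaD (k : ℕ) :
    count1221 (sigmaC (k + 3)) + count1221 (sigmaD (k + 3)) + 3 * 2 ^ k = 4 ^ (k + 1) := by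
  induction k with
  | zero => decide
  | succ k ih =>
    rw [show k + 1 + 3 = k + 3 + 1 from rfl, sigmaC_succ (k + 3), sigmaD_succ (k + 3),
      count1221_sigma_append_cons k (Or.inl rfl), count1221_sigma_append_cons k (Or.inr rfl),
      pow_succ 2 k, pow_succ 4 (k + 1)]
    omega

theorem count1221_sigma_closed_form (k : ℕ) :
    count1221 (sigmaC (k + 4)) + 3 * 2 ^ k = 2 * 4 ^ (k + 1) ∧
      count1221 (sigmaD (k + 4)) + 3 * 2 ^ k = 2 * 4 ^ (k + 1) := by
  rw [sigmaC_succ (k + 3), sigmaD_succ (k + 3), count1221_sigma_append_cons k (Or.inl rfl),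
    count1221_sigma_append_cons k (Or.inr rfl)]
  have := count1221_sigmaC_add_sigmaD k
  constructor <;> omega

theorem pattern_12_21 (n : ℕ) (hn : 4 ≤ n) :
    (count1221 (sigmaC n) : ℚ) = (1 / 2) * 4 ^ (n - 2) - 3 * 2 ^ (n - 4) ∧
    (count1221 (sigmaD n) : ℚ) = (1 / 2) * 4 ^ (n - 2) - 3 * 2 ^ (n - 4) := by
  obtain ⟨k, rfl⟩ := Nat.exists_eq_add_of_le' hn
  rw [show k + 4 - 2 = k + 2 by omega, Nat.add_sub_cancel]
  have cast_closed_form (c : ℕ) (hc : c + 3 * 2 ^ k = 2 * 4 ^ (k + 1)) :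
      (c : ℚ) = 1 / 2 * 4 ^ (k + 2) - 3 * 2 ^ k := by
    have hc' : (c : ℚ) + 3 * 2 ^ k = 2 * 4 ^ (k + 1) := by exact_mod_cast hc
    linear_combination hc'
  exact ⟨cast_closed_form _ (count1221_sigma_closed_form k).1,
    cast_closed_form _ (count1221_sigma_closed_form k).2⟩
end

section
/- For every n ≥ 4, the number of occurrences of the pattern 112-21 in C_n and in D_n both equal (3/2)·4^{n-3} - 2^{n-4}. -/
/-- Number of occurrences of the generalized pattern `112-21` in `w`:
pairs `(i, j)` with `i + 2 < j`, `w(i)w(i+1)w(i+2) = 112` and `w(j)w(j+1) = 21`. -/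
def count112_21 (w : List ℕ) : ℕ :=
  ((Finset.range w.length ×ˢ Finset.range w.length).filter fun q =>
    q.1 + 2 < q.2 ∧ w.getD q.1 0 = 1 ∧ w.getD (q.1 + 1) 0 = 1 ∧ w.getD (q.1 + 2) 0 = 2 ∧
      w.getD q.2 0 = 2 ∧ w.getD (q.2 + 1) 0 = 1).card

/-! Read a word from the right. Its first three letters and its numbers `B` of factors 21
(beyond position 1), `A` of factors 112 and `P` of 112-21 occurrences are updated by a fixed rule
when a letter is prepended, and the rule is affine in the counters. Since `C_k` ends in 122 and
`D_k` starts with 112 for `k ≥ 4`, the glued word `C_k · c · D_k` (`c ∈ {1, 2}`) has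
`B = B(C_k) + B(D_k) + 1`, the extra 21 sitting at the junction, `A = A(C_k) + A(D_k)` and
`P = P(C_k) + P(D_k) + A(C_k) (B(D_k) + 1)`. Hence for `k ≥ 4` the words `C_k` and `D_k` share
`(B, A, P)`, which starts at `(3, 3, 5)` and obeys `(B, A, P) ↦ (2B + 1, 2A, 2P + (B + 1) A)`,
whence `P = 6 · 4^(k-4) - 2^(k-4)`. -/

def count112 (w : List ℕ) : ℕ :=
  ((Finset.range w.length).filter fun i =>
    w.getD i 0 = 1 ∧ w.getD (i + 1) 0 = 1 ∧ w.getD (i + 2) 0 = 2).card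

def count21 (w : List ℕ) : ℕ :=
  ((Finset.range w.length).filter fun j => w.getD j 0 = 2 ∧ w.getD (j + 1) 0 = 1).card

lemma count21_cons (x : ℕ) (w : List ℕ) :
    count21 (x :: w) = count21 w + if x = 2 ∧ w.getD 0 0 = 1 then 1 else 0 := by
  simp only [count21, List.length_cons, Finset.card_filter, Finset.sum_range_succ',
    List.getD_cons_succ, List.getD_cons_zero]

lemma count112_cons (x : ℕ) (w : List ℕ) :
    count112 (x :: w) =
      count112 w + if x = 1 ∧ w.getD 0 0 = 1 ∧ w.getD 1 0 = 2 then 1 else 0 := by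
  simp only [count112, List.length_cons, Finset.card_filter, Finset.sum_range_succ',
    List.getD_cons_succ, List.getD_cons_zero]

lemma count21_drop_one (w : List ℕ) :
    count21 (w.drop 1) =
      count21 (w.drop 2) + if w.getD 1 0 = 2 ∧ w.getD 2 0 = 1 then 1 else 0 := by
  rcases w with _ | ⟨x, _ | ⟨y, w⟩⟩ <;> simp [count21_cons]

lemma count21_drop_two (w : List ℕ) :
    count21 (w.drop 2) = ((Finset.range w.length).filter fun j =>
      2 ≤ j ∧ w.getD j 0 = 2 ∧ w.getD (j + 1) 0 = 1).card := by
  rw [count21, Finset.card_filter, Finset.card_filter]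
  rcases w with _ | ⟨x, _ | ⟨y, w⟩⟩ <;>
    simp only [List.drop, List.length_cons, Finset.sum_range_succ', List.getD_cons_succ,
      List.getD_cons_zero] <;>
    simp

lemma count112_21_cons (x : ℕ) (w : List ℕ) :
    count112_21 (x :: w) = count112_21 w +
      if x = 1 ∧ w.getD 0 0 = 1 ∧ w.getD 1 0 = 2 then count21 (w.drop 2) else 0 := by
  simp only [count112_21, count21_drop_two, List.length_cons, Finset.card_filter,
    Finset.sum_product, Finset.sum_range_succ', List.getD_cons_succ, List.getD_cons_zero,
    Nat.not_lt_zero, false_and, if_false, add_zero]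
  congr 1
  · refine Finset.sum_congr rfl fun i _ => Finset.sum_congr rfl fun j _ => ?_
    exact if_congr (and_congr (by omega) Iff.rfl) rfl rfl
  · split_ifs with hC
    · refine Finset.sum_congr rfl fun j _ => if_congr ?_ rfl rfl
      simp only [hC, true_and]
      omega
    · exact Finset.sum_eq_zero fun j _ => if_neg fun ⟨_, h⟩ => hC ⟨h.1, h.2.1, h.2.2.1⟩

@[ext]
structure Stats where
  c0 : ℕ
  c1 : ℕ
  c2 : ℕ
  n21 : ℕ
  n112 : ℕ
  n112_21 : ℕ

/-- A 1 prepended to `w` completes a 112 at position 0, which pairs exactly with the 21s at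
positions `≥ 2` of `w`; hence `n21` only counts those. -/
def stats (w : List ℕ) : Stats :=
  ⟨w.getD 0 0, w.getD 1 0, w.getD 2 0, count21 (w.drop 2), count112 w, count112_21 w⟩

def Stats.cons (x : ℕ) (s : Stats) : Stats where
  c0 := x
  c1 := s.c0
  c2 := s.c1
  n21 := s.n21 + if s.c1 = 2 ∧ s.c2 = 1 then 1 else 0
  n112 := s.n112 + if x = 1 ∧ s.c0 = 1 ∧ s.c1 = 2 then 1 else 0
  n112_21 := s.n112_21 + if x = 1 ∧ s.c0 = 1 ∧ s.c1 = 2 then s.n21 else 0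

lemma stats_cons (x : ℕ) (w : List ℕ) : stats (x :: w) = (stats w).cons x := by
  ext
  · rfl
  · rfl
  · rfl
  · exact count21_drop_one w
  · exact count112_cons x w
  · exact count112_21_cons x w

lemma stats_append (u v : List ℕ) : stats (u ++ v) = u.foldr Stats.cons (stats v) := by
  induction u with
  | nil => rfl
  | cons x u ih => rw [List.cons_append, stats_cons, ih, List.foldr_cons]

/-- Raising the 21-counter by `l` makes every 112 read later pair with `l` more 21s. -/
abbrev Stats.shift (s : Stats) (l k m : ℕ) : Stats :=
  { s with n21 := s.n21 + l, n112 := s.n112 + k, n112_21 := s.n112_21 + m + l * s.n112 }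

lemma Stats.cons_shift (x : ℕ) (s : Stats) (l k m : ℕ) :
    (s.shift l k m).cons x = (s.cons x).shift l k m := by
  by_cases h : x = 1 ∧ s.c0 = 1 ∧ s.c1 = 2 <;>
    ext <;> simp [Stats.cons, h] <;> ring

lemma Stats.foldr_cons_shift (u : List ℕ) (s : Stats) (l k m : ℕ) :
    u.foldr Stats.cons (s.shift l k m) = (u.foldr Stats.cons s).shift l k m := by
  induction u with
  | nil => rfl
  | cons x u ih => rw [List.foldr_cons, ih, Stats.cons_shift, List.foldr_cons]

lemma stats_nil : stats [] = ⟨0, 0, 0, 0, 0, 0⟩ := by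
  simp [stats, count21, count112, count112_21]

lemma stats_eq_foldr (w : List ℕ) : stats w = w.foldr Stats.cons ⟨0, 0, 0, 0, 0, 0⟩ := by
  rw [← stats_nil, ← stats_append, List.append_nil]

lemma stats_append_cons_of_suffix {u v : List ℕ} {c b a p : ℕ} (hc : c = 1 ∨ c = 2)
    (hu : [1, 2, 2] <:+ u) (hv : stats v = ⟨1, 1, 2, b, a, p⟩) :
    stats (u ++ c :: v) = (stats u).shift (b + 1) a p := by
  obtain ⟨t, rfl⟩ := hu
  have junction : stats (1 :: 2 :: 2 :: c :: v) = (stats [1, 2, 2]).shift (b + 1) a p := by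
    simp only [stats_cons, hv, stats_nil]
    rcases hc with rfl | rfl <;> simp [Stats.cons]
  rw [List.append_assoc, stats_append, List.cons_append, List.cons_append, List.cons_append,
    List.nil_append, junction, Stats.foldr_cons_shift, ← stats_append]

lemma suffix_sigmaD (k : ℕ) : [1, 2, 2] <:+ sigmaD (k + 2) := by
  induction k with
  | zero => exact List.suffix_refl _
  | succ k ih => exact ih.trans ((List.suffix_cons _ _).trans (List.suffix_append _ _))

lemma suffix_sigmaC (k : ℕ) : [1, 2, 2] <:+ sigmaC (k + 3) :=
  (suffix_sigmaD k).trans ((List.suffix_cons _ _).trans (List.suffix_append _ _))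

lemma stats_sigma_succ {k b a p : ℕ} (hk : 3 ≤ k)
    (hC : stats (sigmaC k) = ⟨1, 1, 2, b, a, p⟩) (hD : stats (sigmaD k) = ⟨1, 1, 2, b, a, p⟩) :
    stats (sigmaC (k + 1)) = ⟨1, 1, 2, 2 * b + 1, 2 * a, 2 * p + (b + 1) * a⟩ ∧
      stats (sigmaD (k + 1)) = ⟨1, 1, 2, 2 * b + 1, 2 * a, 2 * p + (b + 1) * a⟩ := by
  obtain ⟨j, rfl⟩ : ∃ j, k = j + 3 := ⟨k - 3, by omega⟩
  have glue (c : ℕ) (hc : c = 1 ∨ c = 2) : stats (sigmaC (j + 3) ++ c :: sigmaD (j + 3)) =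
      ⟨1, 1, 2, 2 * b + 1, 2 * a, 2 * p + (b + 1) * a⟩ := by
    rw [stats_append_cons_of_suffix hc (suffix_sigmaC j) hD, hC]
    ext <;> simp <;> ring
  exact ⟨glue 1 (Or.inl rfl), glue 2 (Or.inr rfl)⟩

lemma stats_sigma (m : ℕ) : ∃ b a p : ℕ,
    stats (sigmaC (m + 4)) = ⟨1, 1, 2, b, a, p⟩ ∧ stats (sigmaD (m + 4)) = ⟨1, 1, 2, b, a, p⟩ ∧
      (b : ℚ) = 4 * 2 ^ m - 1 ∧ (a : ℚ) = 3 * 2 ^ m ∧ (p : ℚ) = 6 * 4 ^ m - 2 ^ m := by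
  induction m with
  | zero =>
    refine ⟨3, 3, 5, ?_, ?_, by norm_num, by norm_num, by norm_num⟩ <;>
      rw [stats_eq_foldr] <;> rfl
  | succ m ih =>
    obtain ⟨b, a, p, hC, hD, hb, ha, hp⟩ := ih
    obtain ⟨hC', hD'⟩ := stats_sigma_succ (by omega) hC hD
    have h4 : (4 : ℚ) ^ m = 2 ^ m * 2 ^ m := by rw [← mul_pow]; norm_num
    refine ⟨_, _, _, hC', hD', ?_, ?_, ?_⟩ <;> push_cast [hb, ha, hp, h4, pow_succ] <;> ring

theorem pattern_112_21 (n : ℕ) (hn : 4 ≤ n) :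
    (count112_21 (sigmaC n) : ℚ) = (3 / 2) * 4 ^ (n - 3) - 2 ^ (n - 4) ∧
    (count112_21 (sigmaD n) : ℚ) = (3 / 2) * 4 ^ (n - 3) - 2 ^ (n - 4) := by
  obtain ⟨m, rfl⟩ : ∃ m, n = m + 4 := ⟨n - 4, by omega⟩
  obtain ⟨b, a, p, hC, hD, -, -, hp⟩ := stats_sigma m
  have hCp : count112_21 (sigmaC (m + 4)) = p := congrArg Stats.n112_21 hC
  have hDp : count112_21 (sigmaD (m + 4)) = p := congrArg Stats.n112_21 hD
  rw [hCp, hDp, hp, show m + 4 - 3 = m + 1 by omega, show m + 4 - 4 = m by omega]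
  constructor <;> ring
end

section
/- The n-th letter of the sigma-sequence w_σ (for n ≥ 1) equals σ where n = 2^t(4s + σ') with σ' ∈ {1, 3}, t the largest power of 2 dividing n, and σ = 1 if σ' = 1, σ = 2 if σ' = 3. That is, the letter at position n of lim C_k is 1 if (n / 2^{v_2(n)}) ≡ 1 (mod 4) and 2 if it is ≡ 3 (mod 4). -/
def sigmaLetter (n : ℕ) : ℕ := if n / 2 ^ padicValNat 2 n % 4 = 1 then 1 else 2

lemma sigmaLetter_two_pow_mul (t : ℕ) {m : ℕ} (hm : Odd m) :
    sigmaLetter (2 ^ t * m) = if m % 4 = 1 then 1 else 2 := by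
  have hval : padicValNat 2 (2 ^ t * m) = t := by
    rw [padicValNat.mul (by positivity) hm.pos.ne', padicValNat.prime_pow,
      padicValNat.eq_zero_of_not_dvd hm.not_two_dvd_nat, add_zero]
  rw [sigmaLetter, hval, Nat.mul_div_cancel_left _ (by positivity)]

lemma sigmaLetter_two_pow (k : ℕ) : sigmaLetter (2 ^ k) = 1 := by
  simpa using sigmaLetter_two_pow_mul k odd_one

lemma sigmaLetter_two_pow_succ_add_two_pow (k : ℕ) : sigmaLetter (2 ^ (k + 1) + 2 ^ k) = 2 := by
  rw [show 2 ^ (k + 1) + 2 ^ k = 2 ^ k * 3 by ring, sigmaLetter_two_pow_mul k (by decide)]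
  rfl

lemma sigmaLetter_two_pow_succ_add {k n : ℕ} (hn : ¬ 2 ^ k ∣ n) :
    sigmaLetter (2 ^ (k + 1) + n) = sigmaLetter n := by
  have hn0 : n ≠ 0 := by rintro rfl; exact hn (dvd_zero _)
  obtain ⟨t, m, hm, rfl⟩ := Nat.exists_eq_two_pow_mul_odd hn0
  have htk : t < k := by
    by_contra! h
    exact hn ((pow_dvd_pow 2 h).mul_right m)
  have hpow : 2 ^ (k + 1) = 2 ^ t * (4 * 2 ^ (k - 1 - t)) := by
    rw [show 4 = 2 ^ 2 from rfl, ← pow_add, ← pow_add]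
    congr 1
    omega
  have hodd : Odd (4 * 2 ^ (k - 1 - t) + m) := Even.add_odd ⟨2 * 2 ^ (k - 1 - t), by ring⟩ hm
  rw [hpow, ← mul_add, sigmaLetter_two_pow_mul t hodd, sigmaLetter_two_pow_mul t hm,
    Nat.mul_add_mod]

lemma range_two_pow_succ_sub_one (k : ℕ) :
    List.range (2 ^ (k + 1) - 1) =
      List.range (2 ^ k - 1) ++ (2 ^ k - 1) :: (List.range (2 ^ k - 1)).map (2 ^ k + ·) := by
  have hk := Nat.one_le_two_pow (n := k)
  rw [show 2 ^ (k + 1) - 1 = (2 ^ k - 1 + 1) + (2 ^ k - 1) by rw [pow_succ]; omega,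
    List.range_add, List.range_succ, List.append_assoc, List.singleton_append,
    Nat.sub_add_cancel hk]

lemma sigmaCD_eq_map_range (k : ℕ) :
    sigmaC k = (List.range (2 ^ k - 1)).map (fun i => sigmaLetter (i + 1)) ∧
      sigmaD k = (List.range (2 ^ k - 1)).map (fun i => sigmaLetter (2 ^ k + i + 1)) := by
  induction k with
  | zero => exact ⟨rfl, rfl⟩
  | succ k ih =>
    obtain ⟨ihC, ihD⟩ := ih
    have hk := Nat.one_le_two_pow (n := k)
    have hlow : ∀ i ∈ List.range (2 ^ k - 1),
        sigmaLetter (2 ^ (k + 1) + i + 1) = sigmaLetter (i + 1) := fun i hi => by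
      rw [List.mem_range] at hi
      rw [add_assoc, sigmaLetter_two_pow_succ_add (Nat.not_dvd_of_pos_of_lt i.succ_pos (by omega))]
    have hhigh : ∀ i ∈ List.range (2 ^ k - 1),
        sigmaLetter (2 ^ (k + 1) + (2 ^ k + i) + 1) = sigmaLetter (2 ^ k + i + 1) := fun i hi => by
      rw [List.mem_range] at hi
      have : ¬ 2 ^ k ∣ 2 ^ k + i + 1 := by
        rw [add_assoc, Nat.dvd_add_right dvd_rfl]
        exact Nat.not_dvd_of_pos_of_lt i.succ_pos (by omega)
      rw [add_assoc (2 ^ (k + 1)), sigmaLetter_two_pow_succ_add this]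
    have hmid : 2 ^ (k + 1) + (2 ^ k - 1) + 1 = 2 ^ (k + 1) + 2 ^ k := by omega
    refine ⟨?_, ?_⟩
    · change sigmaC k ++ 1 :: sigmaD k = _
      rw [ihC, ihD, range_two_pow_succ_sub_one, List.map_append, List.map_cons, List.map_map,
        Nat.sub_add_cancel hk, sigmaLetter_two_pow]
      rfl
    · change sigmaC k ++ 2 :: sigmaD k = _
      rw [ihC, ihD, range_two_pow_succ_sub_one, List.map_append, List.map_cons, List.map_map,
        List.map_congr_left hlow, hmid, sigmaLetter_two_pow_succ_add_two_pow, Function.comp_def,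
        List.map_congr_left hhigh]

theorem sigma_sequence_formula (n : ℕ) (hn : 1 ≤ n) (k : ℕ) (hk : n ≤ 2 ^ k - 1) :
    (sigmaC k).getD (n - 1) 0 =
      if n / 2 ^ (padicValNat 2 n) % 4 = 1 then 1 else 2 := by
  rw [(sigmaCD_eq_map_range k).1, List.getD_eq_getElem?_getD, List.getElem?_map,
    List.getElem?_range (by omega), Option.map_some, Option.getD_some, Nat.sub_add_cancel hn]
  rfl
end
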